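/- arXiv:1809.02367 — 4 statements merged into one kernel-verified Lean document; each statement's English description precedes it below -/
import Mathlib

section
/- Let Λ be a positive integer and h > 0, and for λ = 1,…,Λ let φ_λ = (2λ−1)h. For any segment values Δ_1,…,Δ_Λ with 0 ≤ Δ_λ ≤ h for all λ, setting y = Σ_{λ=1}^Λ Δ_λ, one has Σ_{λ=1}^Λ φ_λ Δ_λ ≥ y². (Proposition 1: the piecewise-linear approximation of y² is never less than y².) -/
lemma pwl_aux (h : ℝ) (hh : 0 < h) (Δ : ℕ → ℝ) :
    ∀ n : ℕ, (∀ l ∈ Finset.Icc 1 n, 0 ≤ Δ l ∧ Δ l ≤ h) →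
    (∑ l ∈ Finset.Icc 1 n, ((2 * (l : ℝ) - 1) * h) * Δ l)
      ≥ (∑ l ∈ Finset.Icc 1 n, Δ l) ^ 2 := by
  intro n
  induction n with
  | zero => simp
  | succ n ih =>
    intro hΔ
    have hmem : ∀ l ∈ Finset.Icc 1 n, 0 ≤ Δ l ∧ Δ l ≤ h := by
      intro l hl
      exact hΔ l (Finset.Icc_subset_Icc_right (Nat.le_succ n) hl)
    have hIH := ih hmem
    rw [Finset.sum_Icc_succ_top (Nat.le_add_left 1 n),
        Finset.sum_Icc_succ_top (Nat.le_add_left 1 n)]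
    have hS : (∑ l ∈ Finset.Icc 1 n, Δ l) ≤ n * h := by
      calc (∑ l ∈ Finset.Icc 1 n, Δ l) ≤ ∑ l ∈ Finset.Icc 1 n, h :=
            Finset.sum_le_sum (fun l hl => (hmem l hl).2)
        _ = n * h := by rw [Finset.sum_const, Nat.card_Icc]; simp
    have hd := hΔ (n+1) (by simp)
    have hkey : 2 * (∑ l ∈ Finset.Icc 1 n, Δ l) * Δ (n+1) + Δ (n+1) ^ 2
        ≤ (2 * ((n:ℝ)+1) - 1) * h * Δ (n+1) := by
      have h1 : 2 * (∑ l ∈ Finset.Icc 1 n, Δ l) * Δ (n+1) ≤ 2 * (n * h) * Δ (n+1) := by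
        apply mul_le_mul_of_nonneg_right _ hd.1
        linarith
      have h2 : Δ (n+1) ^ 2 ≤ h * Δ (n+1) := by
        have := mul_le_mul_of_nonneg_right hd.2 hd.1
        nlinarith
      nlinarith
    push_cast
    nlinarith [hIH, hkey]

/-- Proposition 1: the piecewise-linear approximation of `y²` with slopes
`φ_λ = (2λ−1)h` is never less than `y²`, where `y = Σ Δ_λ` and `0 ≤ Δ_λ ≤ h`. -/
theorem pwl_overestimates_square
    (Λ : ℕ) (hΛ : 0 < Λ) (h : ℝ) (hh : 0 < h)
    (Δ : ℕ → ℝ) (hΔ : ∀ l ∈ Finset.Icc 1 Λ, 0 ≤ Δ l ∧ Δ l ≤ h) :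
    (∑ l ∈ Finset.Icc 1 Λ, ((2 * (l : ℝ) - 1) * h) * Δ l)
      ≥ (∑ l ∈ Finset.Icc 1 Λ, Δ l) ^ 2 := by
  exact pwl_aux h hh Δ Λ hΔ
end

section
/- Let Λ be a positive integer, h > 0, φ_λ = (2λ−1)h, and 0 ≤ y ≤ Λh. Let Δ*_λ = min(h, max(0, y − (λ−1)h)) be the greedy (ESO) filling and let Δ'_1,…,Δ'_Λ be any feasible assignment with 0 ≤ Δ'_λ ≤ h and Σ_{λ=1}^Λ Δ'_λ = y. Then Σ_{λ=1}^Λ φ_λ Δ'_λ − y² ≥ Σ_{λ=1}^Λ φ_λ Δ*_λ − y² ≥ 0 (the inequality chain (19) of the paper). -/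
/-!
Write `S j` for the partial sums of a filling `Δ`. Summation by parts gives
`∑ φ_l Δ_l = (2Λ + 1) h S_Λ - 2h ∑_j S_j`, so among fillings of the same `y` the weighted sum
decreases as the partial sums grow; the feasible partial sums are bounded by `min (j h) y`, which
is exactly what the greedy filling attains. For the lower bound, `y² = ∑ (S_l² - S_{l-1}²)` and
`S_l² - S_{l-1}² = Δ_l (2 S_{l-1} + Δ_l) ≤ Δ_l (2 (l - 1) h + h) = φ_l Δ_l` for every feasible filling.
-/

open Finset

def pwlSlope (h : ℝ) (l : ℕ) : ℝ := (2 * (l : ℝ) - 1) * h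

def esoFill (h y : ℝ) (l : ℕ) : ℝ := min h (max 0 (y - ((l : ℝ) - 1) * h))

section

variable {h : ℝ} {Δ : ℕ → ℝ}

theorem sum_pwlSlope_mul_eq (n : ℕ) :
    ∑ l ∈ Icc 1 n, pwlSlope h l * Δ l
      = (2 * n + 1) * h * ∑ l ∈ Icc 1 n, Δ l - 2 * h * ∑ j ∈ Icc 1 n, ∑ l ∈ Icc 1 j, Δ l := by
  induction n with
  | zero => simp
  | succ n ih =>
    have hn := Nat.le_add_left 1 n
    rw [sum_Icc_succ_top hn, ih, sum_Icc_succ_top hn fun j ↦ ∑ l ∈ Icc 1 j, Δ l,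
      sum_Icc_succ_top hn Δ, pwlSlope]
    push_cast
    ring

theorem sum_pwlSlope_mul_le_of_partialSums_le (hh : 0 ≤ h) {Δ' : ℕ → ℝ} {n : ℕ}
    (htotal : ∑ l ∈ Icc 1 n, Δ l = ∑ l ∈ Icc 1 n, Δ' l)
    (hpartial : ∀ j ∈ Icc 1 n, ∑ l ∈ Icc 1 j, Δ' l ≤ ∑ l ∈ Icc 1 j, Δ l) :
    ∑ l ∈ Icc 1 n, pwlSlope h l * Δ l ≤ ∑ l ∈ Icc 1 n, pwlSlope h l * Δ' l := by
  rw [sum_pwlSlope_mul_eq, sum_pwlSlope_mul_eq, htotal]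
  have := sum_le_sum hpartial
  gcongr

theorem partialSum_le_min_of_feasible {n : ℕ} (hΔ : ∀ l ∈ Icc 1 n, 0 ≤ Δ l ∧ Δ l ≤ h)
    {j : ℕ} (hj : j ∈ Icc 1 n) :
    ∑ l ∈ Icc 1 j, Δ l ≤ min (j * h) (∑ l ∈ Icc 1 n, Δ l) := by
  have hsub : Icc 1 j ⊆ Icc 1 n := Icc_subset_Icc_right (mem_Icc.mp hj).2
  refine le_min ?_ (sum_le_sum_of_subset_of_nonneg hsub fun l hl _ ↦ (hΔ l hl).1)
  simpa using sum_le_card_nsmul _ _ _ fun l hl ↦ (hΔ l (hsub hl)).2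

theorem sum_esoFill (hh : 0 ≤ h) {y : ℝ} (hy : 0 ≤ y) (j : ℕ) :
    ∑ l ∈ Icc 1 j, esoFill h y l = min (j * h) y := by
  induction j with
  | zero => simp [hy]
  | succ n ih =>
    rw [sum_Icc_succ_top (Nat.le_add_left 1 n), ih, esoFill]
    push_cast
    rw [add_sub_cancel_right]
    rcases le_total y (n * h) with hyn | hyn
    · rw [min_eq_right hyn, max_eq_left (by linarith), min_eq_right hh,
        min_eq_right (by nlinarith)]
      ring
    · rw [min_eq_left hyn, max_eq_right (by linarith), add_mul, one_mul, ← min_add_add_left]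
      ring_nf

theorem sq_sum_le_sum_pwlSlope_mul {n : ℕ} (hΔ : ∀ l ∈ Icc 1 n, 0 ≤ Δ l ∧ Δ l ≤ h) :
    (∑ l ∈ Icc 1 n, Δ l) ^ 2 ≤ ∑ l ∈ Icc 1 n, pwlSlope h l * Δ l := by
  induction n with
  | zero => simp
  | succ n ih =>
    have hΔ' : ∀ l ∈ Icc 1 n, 0 ≤ Δ l ∧ Δ l ≤ h := fun l hl ↦
      hΔ l (Icc_subset_Icc_right n.le_succ hl)
    obtain ⟨hlast₀, hlast⟩ := hΔ (n + 1) (right_mem_Icc.mpr (Nat.le_add_left 1 n))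
    have hpartial : ∑ l ∈ Icc 1 n, Δ l ≤ n * h := by
      simpa using sum_le_card_nsmul _ _ _ fun l hl ↦ (hΔ' l hl).2
    rw [sum_Icc_succ_top (Nat.le_add_left 1 n), sum_Icc_succ_top (Nat.le_add_left 1 n), pwlSlope]
    push_cast
    nlinarith [ih hΔ']

end

theorem pwl_error_chain_general
    (Λ : ℕ) (h : ℝ) (hh : 0 < h)
    (y : ℝ) (hy0 : 0 ≤ y) (hyΛ : y ≤ Λ * h)
    (Δ' : ℕ → ℝ) (hΔ' : ∀ l ∈ Finset.Icc 1 Λ, 0 ≤ Δ' l ∧ Δ' l ≤ h)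
    (hsum : (∑ l ∈ Finset.Icc 1 Λ, Δ' l) = y) :
    (∑ l ∈ Finset.Icc 1 Λ, ((2 * (l : ℝ) - 1) * h) * Δ' l) - y ^ 2
      ≥ (∑ l ∈ Finset.Icc 1 Λ,
          ((2 * (l : ℝ) - 1) * h) * min h (max 0 (y - ((l : ℝ) - 1) * h))) - y ^ 2 ∧
    (∑ l ∈ Finset.Icc 1 Λ,
        ((2 * (l : ℝ) - 1) * h) * min h (max 0 (y - ((l : ℝ) - 1) * h))) - y ^ 2
      ≥ 0 := by
  have heso : ∀ l ∈ Icc 1 Λ, 0 ≤ esoFill h y l ∧ esoFill h y l ≤ h := fun _ _ ↦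
    ⟨le_min hh.le (le_max_left _ _), min_le_left _ _⟩
  have heso_sum : ∑ l ∈ Icc 1 Λ, esoFill h y l = y := by
    rw [sum_esoFill hh.le hy0, min_eq_right hyΛ]
  have hcompare : ∑ l ∈ Icc 1 Λ, pwlSlope h l * esoFill h y l
      ≤ ∑ l ∈ Icc 1 Λ, pwlSlope h l * Δ' l := by
    refine sum_pwlSlope_mul_le_of_partialSums_le hh.le (heso_sum.trans hsum.symm) fun j hj ↦ ?_
    rw [sum_esoFill hh.le hy0, ← hsum]
    exact partialSum_le_min_of_feasible hΔ' hj
  have hlower := sq_sum_le_sum_pwlSlope_mul heso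
  rw [heso_sum] at hlower
  exact ⟨sub_le_sub_right hcompare _, sub_nonneg.mpr hlower⟩

/-- Inequality chain (19): `Σ φ Δ' − y² ≥ Σ φ Δ* − y² ≥ 0` for the greedy
(ESO) filling `Δ*` and any feasible filling `Δ'` of the same `y`. -/
theorem pwl_error_chain
    (Λ : ℕ) (hΛ : 0 < Λ) (h : ℝ) (hh : 0 < h)
    (y : ℝ) (hy0 : 0 ≤ y) (hyΛ : y ≤ Λ * h)
    (Δ' : ℕ → ℝ) (hΔ' : ∀ l ∈ Finset.Icc 1 Λ, 0 ≤ Δ' l ∧ Δ' l ≤ h)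
    (hsum : (∑ l ∈ Finset.Icc 1 Λ, Δ' l) = y) :
    (∑ l ∈ Finset.Icc 1 Λ, ((2 * (l : ℝ) - 1) * h) * Δ' l) - y ^ 2
      ≥ (∑ l ∈ Finset.Icc 1 Λ,
          ((2 * (l : ℝ) - 1) * h) * min h (max 0 (y - ((l : ℝ) - 1) * h))) - y ^ 2 ∧
    (∑ l ∈ Finset.Icc 1 Λ,
        ((2 * (l : ℝ) - 1) * h) * min h (max 0 (y - ((l : ℝ) - 1) * h))) - y ^ 2
      ≥ 0 :=
  pwl_error_chain_general Λ h hh y hy0 hyΛ Δ' hΔ' hsum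
end

section
/- Let Λ be a positive integer, h > 0, φ_λ = (2λ−1)h, and let y satisfy 0 < y ≤ Λh. Let Δ*_λ = min(h, max(0, y − (λ−1)h)) be the greedy (ESO) filling and Δ'_1,…,Δ'_Λ any feasible assignment with 0 ≤ Δ'_λ ≤ h and Σ_{λ=1}^Λ Δ'_λ = y. Then the relative approximation errors satisfy |Σ φ_λ Δ*_λ − y²| / y² ≤ |Σ φ_λ Δ'_λ − y²| / y², i.e., the ESO filling minimizes the relative PWL approximation error E_y. -/
open Finset

lemma sum_le_nh (h : ℝ) (n : ℕ) (Δ : ℕ → ℝ) (hb : ∀ l ∈ Icc 1 n, Δ l ≤ h) :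
    (∑ l ∈ Icc 1 n, Δ l) ≤ n * h := by
  calc (∑ l ∈ Icc 1 n, Δ l) ≤ ∑ l ∈ Icc 1 n, h := Finset.sum_le_sum hb
    _ = n * h := by rw [Finset.sum_const, Nat.card_Icc]; simp [nsmul_eq_mul]

lemma sq_le_val (h : ℝ) (hh : 0 ≤ h) (n : ℕ) (Δ : ℕ → ℝ)
    (hb : ∀ l ∈ Icc 1 n, 0 ≤ Δ l ∧ Δ l ≤ h) :
    (∑ l ∈ Icc 1 n, Δ l) ^ 2 ≤ ∑ l ∈ Icc 1 n, ((2 * (l : ℝ) - 1) * h) * Δ l := by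
  induction n with
  | zero => simp
  | succ n ih =>
    rw [Finset.sum_Icc_succ_top (by omega), Finset.sum_Icc_succ_top (by omega)]
    have hb' : ∀ l ∈ Icc 1 n, 0 ≤ Δ l ∧ Δ l ≤ h := fun l hl => hb l (by
      simp only [mem_Icc] at *; omega)
    have ih' := ih hb'
    have hS : (∑ l ∈ Icc 1 n, Δ l) ≤ n * h := sum_le_nh h n Δ (fun l hl => (hb' l hl).2)
    have hd := hb (n+1) (by simp)
    push_cast
    nlinarith [hd.1, hd.2, hS, ih']

lemma greedy_partial (h : ℝ) (hh : 0 ≤ h) (y : ℝ) (n : ℕ) :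
    (∑ l ∈ Icc 1 n, min h (max 0 (y - ((l : ℝ) - 1) * h))) = min (n * h) (max 0 y) := by
  induction n with
  | zero => simp [min_eq_left (le_max_left 0 y)]
  | succ n ih =>
    rw [Finset.sum_Icc_succ_top (by omega), ih]
    have hcast : ((n + 1 : ℕ) : ℝ) * h = n * h + h := by push_cast; ring
    have hcast2 : ((n + 1 : ℕ) : ℝ) - 1 = (n : ℝ) := by push_cast; ring
    rw [hcast, hcast2]
    have hnh : (0:ℝ) ≤ n * h := by positivity
    rcases le_total y (n * h) with c | c
    · have h1 : max 0 (y - n * h) = 0 := max_eq_left (by linarith)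
      have h2 : max 0 y ≤ n * h := max_le hnh c
      rw [h1, min_eq_right hh, min_eq_right h2, min_eq_right (by linarith)]; ring
    · have hy0 : 0 ≤ y := le_trans hnh c
      have h1 : max 0 y = y := max_eq_right hy0
      have h2 : max 0 (y - n * h) = y - n * h := max_eq_right (by linarith)
      rw [h1, h2, min_eq_left c]
      rcases le_total h (y - n * h) with d | d
      · rw [min_eq_left d, min_eq_left (by linarith)]
      · rw [min_eq_right d, min_eq_right (by linarith)]; ring

lemma abel_id (h : ℝ) (Δ : ℕ → ℝ) (n : ℕ) :
    (∑ l ∈ Icc 1 n, ((2 * (l : ℝ) - 1) * h) * Δ l)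
      = (2 * n + 1) * h * (∑ l ∈ Icc 1 n, Δ l)
        - 2 * h * ∑ k ∈ Icc 1 n, (∑ l ∈ Icc 1 k, Δ l) := by
  induction n with
  | zero => simp
  | succ n ih =>
    rw [Finset.sum_Icc_succ_top (a := 1) (by omega),
        Finset.sum_Icc_succ_top (a := 1) (f := Δ) (by omega),
        Finset.sum_Icc_succ_top (a := 1) (f := fun k => ∑ l ∈ Icc 1 k, Δ l) (by omega),
        Finset.sum_Icc_succ_top (a := 1) (f := Δ) (by omega), ih]
    push_cast
    ring
/-- The ESO (greedy) filling minimizes the relative PWL approximation error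
`E_y = |f(Δ) − y²| / y²` among all feasible fillings of the same `y > 0`. -/
theorem greedy_minimizes_relative_error
    (Λ : ℕ) (hΛ : 0 < Λ) (h : ℝ) (hh : 0 < h)
    (y : ℝ) (hy0 : 0 < y) (hyΛ : y ≤ Λ * h)
    (Δ' : ℕ → ℝ) (hΔ' : ∀ l ∈ Finset.Icc 1 Λ, 0 ≤ Δ' l ∧ Δ' l ≤ h)
    (hsum : (∑ l ∈ Finset.Icc 1 Λ, Δ' l) = y) :
    |(∑ l ∈ Finset.Icc 1 Λ,
        ((2 * (l : ℝ) - 1) * h) * min h (max 0 (y - ((l : ℝ) - 1) * h))) - y ^ 2| / y ^ 2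
      ≤ |(∑ l ∈ Finset.Icc 1 Λ, ((2 * (l : ℝ) - 1) * h) * Δ' l) - y ^ 2| / y ^ 2 := by
  set Δs : ℕ → ℝ := fun l => min h (max 0 (y - ((l : ℝ) - 1) * h)) with hΔs
  have hΔsb : ∀ l ∈ Icc 1 Λ, 0 ≤ Δs l ∧ Δs l ≤ h := fun l _ =>
    ⟨le_min hh.le (le_max_left 0 _), min_le_left _ _⟩
  -- greedy partial sums
  have hgp : ∀ k : ℕ, (∑ l ∈ Icc 1 k, Δs l) = min (k * h) (max 0 y) := fun k =>
    greedy_partial h hh.le y k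
  have hgsum : (∑ l ∈ Icc 1 Λ, Δs l) = y := by
    rw [hgp Λ, max_eq_right hy0.le, min_eq_right hyΛ]
  -- both values are at least y^2
  have hA : y ^ 2 ≤ ∑ l ∈ Icc 1 Λ, ((2 * (l : ℝ) - 1) * h) * Δs l := by
    have := sq_le_val h hh.le Λ Δs hΔsb
    rwa [hgsum] at this
  have hB : y ^ 2 ≤ ∑ l ∈ Icc 1 Λ, ((2 * (l : ℝ) - 1) * h) * Δ' l := by
    have := sq_le_val h hh.le Λ Δ' hΔ'
    rwa [hsum] at this
  -- greedy value is minimal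
  have hpart : ∀ k ∈ Icc 1 Λ, (∑ l ∈ Icc 1 k, Δ' l) ≤ ∑ l ∈ Icc 1 k, Δs l := by
    intro k hk
    simp only [mem_Icc] at hk
    rw [hgp k, max_eq_right hy0.le]
    refine le_min (sum_le_nh h k Δ' ?_) ?_
    · intro l hl
      exact (hΔ' l (by simp only [mem_Icc] at *; omega)).2
    · rw [← hsum]
      refine Finset.sum_le_sum_of_subset_of_nonneg (Finset.Icc_subset_Icc_right hk.2) ?_
      intro l hl _
      exact (hΔ' l hl).1
  have hAB : (∑ l ∈ Icc 1 Λ, ((2 * (l : ℝ) - 1) * h) * Δs l)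
      ≤ ∑ l ∈ Icc 1 Λ, ((2 * (l : ℝ) - 1) * h) * Δ' l := by
    rw [abel_id, abel_id, hgsum, hsum]
    have : (∑ k ∈ Icc 1 Λ, ∑ l ∈ Icc 1 k, Δ' l) ≤ ∑ k ∈ Icc 1 Λ, ∑ l ∈ Icc 1 k, Δs l :=
      Finset.sum_le_sum hpart
    nlinarith
  -- conclude
  have hy2 : (0:ℝ) < y ^ 2 := by positivity
  rw [abs_of_nonneg (by linarith), abs_of_nonneg (by linarith)]
  gcongr
end

section
/- Let Λ ≥ 2 be an integer, h > 0, M ≥ h, ε ≥ 0, and 0 ≤ y ≤ Λh. Let Δ*_λ = min(h, max(0, y − (λ−1)h)) be the greedy (ESO) filling. Then there exist binaries x_1,…,x_{Λ−1} ∈ {0,1} such that for all λ = 1,…,Λ−1: Δ*_λ − h + (1 − x_λ)M + ε ≥ 0 and 0 ≤ Δ*_{λ+1} ≤ x_λ h; i.e., the ESO filling is feasible for the supplemented big-M constraints (20)–(21). -/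
/-- The ESO (greedy) filling is feasible for the supplemented big-M
constraints (20)–(21). -/
theorem greedy_feasible_for_bigM
    (Λ : ℕ) (hΛ : 2 ≤ Λ) (h : ℝ) (hh : 0 < h) (M : ℝ) (hM : h ≤ M)
    (ε : ℝ) (hε : 0 ≤ ε)
    (y : ℝ) (hy0 : 0 ≤ y) (hyΛ : y ≤ Λ * h) :
    ∃ x : ℕ → ℝ,
      ∀ l, 1 ≤ l → l ≤ Λ - 1 →
        (x l = 0 ∨ x l = 1) ∧
        (min h (max 0 (y - ((l : ℝ) - 1) * h)) - h + (1 - x l) * M + ε ≥ 0) ∧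
        (0 ≤ min h (max 0 (y - (((l : ℝ) + 1) - 1) * h)) ∧
          min h (max 0 (y - (((l : ℝ) + 1) - 1) * h)) ≤ x l * h) := by
  refine ⟨fun l => if (l : ℝ) * h ≤ y then 1 else 0, fun l hl1 hl2 => ?_⟩
  by_cases hc : (l : ℝ) * h ≤ y
  · simp only [hc, if_pos]
    refine ⟨Or.inr trivial, ?_, ?_, ?_⟩
    · have : min h (max 0 (y - ((l : ℝ) - 1) * h)) = h := by
        rw [min_eq_left]
        rw [le_max_iff]; right; nlinarith
      rw [this]; nlinarith
    · positivity
    · simp only [one_mul]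
      exact min_le_left _ _
  · simp only [hc, if_neg, not_false_iff]
    push_neg at hc
    refine ⟨Or.inl trivial, ?_, ?_, ?_⟩
    · have h1 : 0 ≤ min h (max 0 (y - ((l : ℝ) - 1) * h)) :=
        le_min hh.le (le_max_left _ _)
      nlinarith
    · positivity
    · have : max 0 (y - (((l : ℝ) + 1) - 1) * h) = 0 := by
        rw [max_eq_left]; nlinarith
      rw [this]
      simp [min_eq_right hh.le]
end
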